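/- arXiv:1504.05768 — 4 statements merged into one kernel-verified Lean document; each statement's English description precedes it below -/
import Mathlib

section
/- Let Θ be a channel, η a state, and Γ_{t,Θ,η}(T) = t·Θ(T) + (1−t)·tr[ηT]·1. If n ≥ 2 and 0 ≤ t ≤ 1/n, then for any POVMs A₁,…,Aₙ, the POVMs Γ_{t,Θ,η}∘A₁,…,Γ_{t,Θ,η}∘Aₙ are compatible. Explicitly, G(a₁,…,aₙ) = ∑ᵢ t·Θ(Aᵢ(aᵢ))·∏_{j≠i} tr[η Aⱼ(aⱼ)] + (1−tn)·∏ⱼ tr[η Aⱼ(aⱼ)]·1 is a joint observable for them. -/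
/-!
With `p j b = tr[η Aⱼ(b)]`, each `p j` is a probability vector, and `G` mixes `n + 1` ways of
producing all outcomes: for each `i`, measure `Θ ∘ Aᵢ` and draw every other outcome `g j`
independently from `p j`; or draw all outcomes from the `p j`. The weights `t, …, t, 1 - t n` are
nonnegative exactly when `t ≤ 1 / n`, which gives positivity. Summing out all coordinates but
`g k = a`, the `i = k` term leaves `t Θ(Aₖ(a))`, each of the `n - 1` terms `i ≠ k` leaves
`t pₖ(a) Θ(1) = t pₖ(a) 1`, and the last term leaves `(1 - t n) pₖ(a) 1`: in total
`Γ(Aₖ(a))`.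
-/

open scoped BigOperators ComplexOrder
open Matrix Finset

abbrev Mat (d : ℕ) := Matrix (Fin d) (Fin d) ℂ

/-- A POVM with finite outcome set `Ω`. -/
def IsPOVM {d : ℕ} {Ω : Type} [Fintype Ω] (A : Ω → Mat d) : Prop :=
  (∀ a, (A a).PosSemidef) ∧ ∑ a, A a = 1

/-- `G` is a joint observable for the family `A` of POVMs. -/
def IsJoint {d n : ℕ} {Ω : Fin n → Type} [∀ i, Fintype (Ω i)] [∀ i, DecidableEq (Ω i)]
    (A : ∀ i, Ω i → Mat d) (G : (∀ i, Ω i) → Mat d) : Prop :=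
  IsPOVM G ∧ ∀ (i : Fin n) (a : Ω i), ∑ g ∈ univ.filter (fun g => g i = a), G g = A i a

/-- The POVMs `A i` are compatible (jointly measurable). -/
def Compatible {d n : ℕ} {Ω : Fin n → Type} [∀ i, Fintype (Ω i)] [∀ i, DecidableEq (Ω i)]
    (A : ∀ i, Ω i → Mat d) : Prop :=
  ∃ G, IsJoint A G

theorem Matrix.PosSemidef.trace_mul_nonneg {𝕜 m : Type*} [RCLike 𝕜] [Fintype m]
    {P Q : Matrix m m 𝕜} (hP : P.PosSemidef) (hQ : Q.PosSemidef) : 0 ≤ (P * Q).trace := by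
  classical
  open scoped MatrixOrder in
  obtain ⟨B, rfl⟩ := CStarAlgebra.nonneg_iff_eq_star_mul_self.mp hP.nonneg
  rw [mul_assoc, trace_mul_comm, star_eq_conjTranspose]
  exact (hQ.mul_mul_conjTranspose_same B).trace_nonneg

section ProductWeights

variable {ι : Type*} [Fintype ι] [DecidableEq ι] {Ω : ι → Type*} {R : Type*} [CommSemiring R]

theorem Fintype.filter_apply_eq_eq_piFinset [∀ i, Fintype (Ω i)] [∀ i, DecidableEq (Ω i)] (k : ι)
    (a : Ω k) :
    univ.filter (fun g : ∀ j, Ω j => g k = a) =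
      Fintype.piFinset (Function.update (fun _ => univ) k {a}) := by
  rw [Fintype.piFinset_update_singleton_eq_filter_piFinset_eq (fun _ => univ) k (mem_univ a),
    Fintype.piFinset_univ]

theorem sum_piFinset_update_prod_erase (S : ∀ j, Finset (Ω j)) (f : ∀ j, Ω j → R) (i : ι)
    (b : Ω i) :
    ∑ g ∈ Fintype.piFinset (Function.update S i {b}), ∏ j ∈ univ.erase i, f j (g j) =
      ∏ j ∈ univ.erase i, ∑ c ∈ S j, f j c := by
  set f' := Function.update f i (fun _ => 1)
  have hf' : ∀ g : ∀ j, Ω j, ∏ j ∈ univ.erase i, f j (g j) = ∏ j, f' j (g j) := fun g => by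
    rw [← mul_prod_erase univ _ (mem_univ i)]
    simp only [f', Function.update_self, one_mul]
    exact prod_congr rfl fun j hj => by rw [Function.update_of_ne (ne_of_mem_erase hj)]
  simp_rw [hf', ← prod_univ_sum, ← mul_prod_erase univ _ (mem_univ i)]
  simp only [f', Function.update_self, sum_singleton, one_mul]
  exact prod_congr rfl fun j hj => by
    simp only [Function.update_of_ne (ne_of_mem_erase hj)]

theorem sum_piFinset_prod_erase_smul [∀ i, DecidableEq (Ω i)] {M : Type*} [AddCommMonoid M]
    [Module R M] (S : ∀ j, Finset (Ω j)) (f : ∀ j, Ω j → R) (i : ι) (B : Ω i → M) :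
    ∑ g ∈ Fintype.piFinset S, (∏ j ∈ univ.erase i, f j (g j)) • B (g i) =
      (∏ j ∈ univ.erase i, ∑ c ∈ S j, f j c) • ∑ b ∈ S i, B b := by
  rw [← sum_fiberwise_of_maps_to (g := fun g : ∀ j, Ω j => g i)
    fun g hg => Fintype.mem_piFinset.mp hg i, smul_sum]
  refine sum_congr rfl fun b hb => ?_
  rw [← Fintype.piFinset_update_singleton_eq_filter_piFinset_eq S i hb,
    ← sum_piFinset_update_prod_erase S f i b, sum_smul]
  refine sum_congr rfl fun g hg => ?_
  have : g i = b := by simpa using Fintype.mem_piFinset.mp hg i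
  rw [this]

end ProductWeights

section ProbabilityWeights

variable {ι : Type*} [DecidableEq ι] {Ω : ι → Type*} [∀ i, Fintype (Ω i)] {R : Type*}
  [CommSemiring R] {p : ∀ j, Ω j → R}

theorem prod_sum_update_singleton (hp : ∀ j, ∑ b, p j b = 1) (s : Finset ι) (k : ι) (a : Ω k) :
    ∏ j ∈ s, ∑ c ∈ Function.update (fun _ => univ) k {a} j, p j c =
      if k ∈ s then p k a else 1 := by
  have hupd : ∀ j, ∑ c ∈ Function.update (fun _ => univ) k {a} j, p j c =
      Function.update (fun _ => (1 : R)) k (p k a) j := fun j => by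
    rcases eq_or_ne j k with rfl | hjk
    · simp
    · simp [Function.update_of_ne hjk, hp]
  rw [prod_congr rfl fun j _ => hupd j]
  split_ifs with hk
  · rw [prod_update_of_mem hk, prod_const_one, mul_one]
  · rw [prod_update_of_notMem hk, prod_const_one]

variable [Fintype ι]

theorem sum_prod_eq_one (hp : ∀ j, ∑ b, p j b = 1) : ∑ g : ∀ j, Ω j, ∏ j, p j (g j) = 1 := by
  rw [← Fintype.prod_sum, prod_eq_one fun j _ => hp j]

variable [∀ i, DecidableEq (Ω i)] {M : Type*} [AddCommMonoid M] [Module R M]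

theorem sum_prod_erase_smul (hp : ∀ j, ∑ b, p j b = 1) (i : ι) (B : Ω i → M) :
    ∑ g : ∀ j, Ω j, (∏ j ∈ univ.erase i, p j (g j)) • B (g i) = ∑ b, B b := by
  rw [← Fintype.piFinset_univ, sum_piFinset_prod_erase_smul, prod_eq_one fun j _ => hp j,
    one_smul]

theorem sum_filter_prod (hp : ∀ j, ∑ b, p j b = 1) (k : ι) (a : Ω k) :
    ∑ g ∈ univ.filter (fun g : ∀ j, Ω j => g k = a), ∏ j, p j (g j) = p k a := by
  rw [Fintype.filter_apply_eq_eq_piFinset, ← prod_univ_sum, prod_sum_update_singleton hp,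
    if_pos (mem_univ k)]

theorem sum_filter_prod_erase_smul_self (hp : ∀ j, ∑ b, p j b = 1) (k : ι) (a : Ω k)
    (B : Ω k → M) :
    ∑ g ∈ univ.filter (fun g : ∀ j, Ω j => g k = a), (∏ j ∈ univ.erase k, p j (g j)) • B (g k) =
      B a := by
  rw [Fintype.filter_apply_eq_eq_piFinset, sum_piFinset_prod_erase_smul,
    prod_sum_update_singleton hp, if_neg (notMem_erase k univ), one_smul, Function.update_self,
    sum_singleton]

theorem sum_filter_prod_erase_smul_of_ne (hp : ∀ j, ∑ b, p j b = 1) {i k : ι} (hik : i ≠ k)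
    (a : Ω k) (B : Ω i → M) :
    ∑ g ∈ univ.filter (fun g : ∀ j, Ω j => g k = a), (∏ j ∈ univ.erase i, p j (g j)) • B (g i) =
      p k a • ∑ b, B b := by
  rw [Fintype.filter_apply_eq_eq_piFinset, sum_piFinset_prod_erase_smul,
    prod_sum_update_singleton hp, if_pos (mem_erase.mpr ⟨hik.symm, mem_univ k⟩),
    Function.update_of_ne hik]

end ProbabilityWeights

namespace IsPOVM

variable {d : ℕ} {Ω : Type} [Fintype Ω] {A : Ω → Mat d}

theorem map (hA : IsPOVM A) {Θ : Mat d →ₗ[ℂ] Mat d} (hΘ1 : Θ 1 = 1)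
    (hΘpos : ∀ T : Mat d, T.PosSemidef → (Θ T).PosSemidef) : IsPOVM (fun a => Θ (A a)) :=
  ⟨fun a => hΘpos _ (hA.1 a), by rw [← map_sum, hA.2, hΘ1]⟩

theorem sum_trace_mul (hA : IsPOVM A) {η : Mat d} (hη1 : η.trace = 1) :
    ∑ a, (η * A a).trace = 1 := by
  rw [← trace_sum, ← mul_sum, hA.2, mul_one, hη1]

end IsPOVM

section NoisyJoint

variable {d n : ℕ} {Ω : Fin n → Type} {t : ℝ} {B : ∀ i, Ω i → Mat d} {p : ∀ i, Ω i → ℂ}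

variable (t B p) in
def noisyJoint (g : ∀ i, Ω i) : Mat d :=
  (∑ i, ((t : ℂ) * ∏ j ∈ univ.erase i, p j (g j)) • B i (g i)) +
    ((1 - (t : ℂ) * n) * ∏ j, p j (g j)) • 1

theorem noisyJoint_posSemidef (hB : ∀ i a, (B i a).PosSemidef) (hp : ∀ i a, 0 ≤ p i a)
    (ht0 : 0 ≤ t) (htn : t * n ≤ 1) (g : ∀ i, Ω i) : (noisyJoint t B p g).PosSemidef := by
  have ht0' : (0 : ℂ) ≤ t := Complex.zero_le_real.mpr ht0
  have htn' : (0 : ℂ) ≤ 1 - (t : ℂ) * n := by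
    exact_mod_cast Complex.zero_le_real.mpr (sub_nonneg.mpr htn)
  refine .add (posSemidef_sum _ fun i _ => (hB i (g i)).smul ?_) (PosSemidef.one.smul ?_)
  · exact mul_nonneg ht0' (prod_nonneg fun j _ => hp j (g j))
  · exact mul_nonneg htn' (prod_nonneg fun j _ => hp j (g j))

variable [∀ i, Fintype (Ω i)]

theorem sum_noisyJoint (hB : ∀ i, ∑ a, B i a = 1) (hp : ∀ i, ∑ a, p i a = 1) :
    ∑ g, noisyJoint t B p g = 1 := by
  classical
  simp only [noisyJoint, sum_add_distrib, mul_smul, ← smul_sum, ← sum_smul]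
  rw [sum_comm]
  simp only [sum_prod_erase_smul hp, hB, sum_prod_eq_one hp, sum_const, card_univ,
    Fintype.card_fin]
  module

variable [∀ i, DecidableEq (Ω i)]

theorem sum_filter_noisyJoint (hB : ∀ i, ∑ a, B i a = 1) (hp : ∀ i, ∑ a, p i a = 1) (k : Fin n)
    (a : Ω k) :
    ∑ g ∈ univ.filter (fun g => g k = a), noisyJoint t B p g =
      (t : ℂ) • B k a + (((1 - t : ℝ) : ℂ) * p k a) • 1 := by
  have hne : ∀ i ∈ univ.erase k,
      ∑ g ∈ univ.filter (fun g : ∀ j, Ω j => g k = a),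
        (∏ j ∈ univ.erase i, p j (g j)) • B i (g i) = p k a • 1 := fun i hi => by
    rw [sum_filter_prod_erase_smul_of_ne hp (ne_of_mem_erase hi), hB]
  simp only [noisyJoint, sum_add_distrib, mul_smul, ← sum_smul, ← smul_sum]
  rw [sum_comm, ← add_sum_erase _ _ (mem_univ k)]
  simp only [sum_filter_prod_erase_smul_self hp, sum_filter_prod hp]
  rw [sum_congr rfl fun i hi => by rw [hne i hi], sum_const, card_erase_of_mem (mem_univ k),
    card_univ, Fintype.card_fin, ← Nat.cast_smul_eq_nsmul ℂ, Nat.cast_pred k.pos]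
  push_cast
  module

theorem isJoint_noisyJoint (hB : ∀ i, IsPOVM (B i)) (hp0 : ∀ i a, 0 ≤ p i a)
    (hp1 : ∀ i, ∑ a, p i a = 1) (ht0 : 0 ≤ t) (htn : t * n ≤ 1) :
    IsJoint (fun i a => (t : ℂ) • B i a + (((1 - t : ℝ) : ℂ) * p i a) • (1 : Mat d))
      (noisyJoint t B p) :=
  ⟨⟨noisyJoint_posSemidef (fun i => (hB i).1) hp0 ht0 htn,
    sum_noisyJoint (fun i => (hB i).2) hp1⟩,
    sum_filter_noisyJoint (fun i => (hB i).2) hp1⟩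

end NoisyJoint

theorem noisy_channel_n_incompatibility_breaking_general {d n : ℕ}
    (Θ : Mat d →ₗ[ℂ] Mat d) (hΘ1 : Θ 1 = 1)
    (hΘpos : ∀ T : Mat d, T.PosSemidef → (Θ T).PosSemidef)
    (η : Mat d) (hη : η.PosSemidef) (hη1 : η.trace = 1)
    (t : ℝ) (ht0 : 0 ≤ t) (ht : t ≤ 1 / n)
    (Ω : Fin n → Type) [∀ i, Fintype (Ω i)] [∀ i, DecidableEq (Ω i)]
    (A : ∀ i, Ω i → Mat d) (hA : ∀ i, IsPOVM (A i)) :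
    IsJoint
      (fun i a => (t : ℂ) • Θ (A i a) + (((1 - t : ℝ) : ℂ) * (η * A i a).trace) • (1 : Mat d))
      (fun g =>
        (∑ i, ((t : ℂ) * ∏ j ∈ Finset.univ.erase i, (η * A j (g j)).trace) • Θ (A i (g i))) +
          ((1 - (t : ℂ) * n) * ∏ j, (η * A j (g j)).trace) • (1 : Mat d)) ∧
    Compatible
      (fun i a => (t : ℂ) • Θ (A i a) + (((1 - t : ℝ) : ℂ) * (η * A i a).trace) • (1 : Mat d)) := by
  have htn : t * n ≤ 1 := by
    rcases Nat.eq_zero_or_pos n with rfl | hn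
    · simp
    · exact (le_div_iff₀ (Nat.cast_pos.mpr hn)).mp ht
  have hJ := isJoint_noisyJoint (fun i => (hA i).map hΘ1 hΘpos)
    (fun i a => hη.trace_mul_nonneg ((hA i).1 a)) (fun i => (hA i).sum_trace_mul hη1) ht0 htn
  exact ⟨hJ, _, hJ⟩

/-- The noisy channel `Γ_{t,Θ,η}(T) = t·Θ(T) + (1−t)·tr[ηT]·1` breaks the
incompatibility of any set of `n` observables whenever `0 ≤ t ≤ 1/n`, with the explicit joint
observable `G(a₁,…,aₙ) = ∑ᵢ t·Θ(Aᵢ(aᵢ))·∏_{j≠i} tr[η Aⱼ(aⱼ)] + (1−tn)·∏ⱼ tr[η Aⱼ(aⱼ)]·1`. -/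
theorem noisy_channel_n_incompatibility_breaking {d n : ℕ} (hn : 2 ≤ n)
    (Θ : Mat d →ₗ[ℂ] Mat d) (hΘ1 : Θ 1 = 1)
    (hΘpos : ∀ T : Mat d, T.PosSemidef → (Θ T).PosSemidef)
    (η : Mat d) (hη : η.PosSemidef) (hη1 : η.trace = 1)
    (t : ℝ) (ht0 : 0 ≤ t) (ht : t ≤ 1 / n)
    (Ω : Fin n → Type) [∀ i, Fintype (Ω i)] [∀ i, DecidableEq (Ω i)]
    (A : ∀ i, Ω i → Mat d) (hA : ∀ i, IsPOVM (A i)) :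
    IsJoint
      (fun i a => (t : ℂ) • Θ (A i a) + (((1 - t : ℝ) : ℂ) * (η * A i a).trace) • (1 : Mat d))
      (fun g =>
        (∑ i, ((t : ℂ) * ∏ j ∈ Finset.univ.erase i, (η * A j (g j)).trace) • Θ (A i (g i))) +
          ((1 - (t : ℂ) * n) * ∏ j, (η * A j (g j)).trace) • (1 : Mat d)) ∧
    Compatible
      (fun i a => (t : ℂ) • Θ (A i a) + (((1 - t : ℝ) : ℂ) * (η * A i a).trace) • (1 : Mat d)) :=
  noisy_channel_n_incompatibility_breaking_general Θ hΘ1 hΘpos η hη hη1 t ht0 ht Ω A hA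
end

section
/- The set of n-incompatibility breaking channels is a two-sided ideal in the monoid of channels under composition: if Λ is any channel and Λ′ is n-incompatibility breaking, then both Λ∘Λ′ and Λ′∘Λ are n-incompatibility breaking. -/
open scoped BigOperators ComplexOrder
open Matrix Finset

/-- Complete positivity of a linear map on `Mat d`: every blockwise application
`id_k ⊗ Λ` preserves positive semidefiniteness. -/
def IsCP {d : ℕ} (Λ : Mat d →ₗ[ℂ] Mat d) : Prop :=
  ∀ (k : ℕ) (M : Matrix (Fin k × Fin d) (Fin k × Fin d) ℂ), M.PosSemidef →
    (Matrix.of (fun p q : Fin k × Fin d =>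
      Λ (Matrix.of fun i j => M (p.1, i) (q.1, j)) p.2 q.2)).PosSemidef

/-- A quantum channel (in the Heisenberg picture): a unital completely positive linear map. -/
def IsChannel {d : ℕ} (Λ : Mat d →ₗ[ℂ] Mat d) : Prop :=
  Λ 1 = 1 ∧ IsCP Λ

/-- `Λ` is `n`-incompatibility breaking: it maps every collection of `n` POVMs into a
compatible collection. -/
def NIBC {d : ℕ} (n : ℕ) (Λ : Mat d →ₗ[ℂ] Mat d) : Prop :=
  ∀ (Ω : Fin n → Type) (_ : ∀ i, Fintype (Ω i)) (_ : ∀ i, DecidableEq (Ω i))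
    (A : ∀ i, Ω i → Mat d), (∀ i, IsPOVM (A i)) → Compatible (fun i a => Λ (A i a))

lemma channel_psd {d : ℕ} {Λ : Mat d →ₗ[ℂ] Mat d} (h : IsChannel Λ)
    {A : Mat d} (hA : A.PosSemidef) : (Λ A).PosSemidef := by
  have hM : (A.submatrix (Prod.snd : Fin 1 × Fin d → Fin d) Prod.snd).PosSemidef :=
    hA.submatrix _
  have := (h.2 1 _ hM).submatrix (fun j : Fin d => ((0 : Fin 1), j))
  exact this

lemma channel_povm {d : ℕ} {Λ : Mat d →ₗ[ℂ] Mat d} (h : IsChannel Λ)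
    {Ω : Type} [Fintype Ω] {A : Ω → Mat d} (hA : IsPOVM A) :
    IsPOVM (fun a => Λ (A a)) := by
  refine ⟨fun a => channel_psd h (hA.1 a), ?_⟩
  rw [← map_sum, hA.2, h.1]

lemma channel_compat {d n : ℕ} {Λ : Mat d →ₗ[ℂ] Mat d} (h : IsChannel Λ)
    {Ω : Fin n → Type} [∀ i, Fintype (Ω i)] [∀ i, DecidableEq (Ω i)]
    {A : ∀ i, Ω i → Mat d} (hA : Compatible A) :
    Compatible (fun i a => Λ (A i a)) := by
  obtain ⟨G, hG, hmarg⟩ := hA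
  exact ⟨fun g => Λ (G g), channel_povm h hG,
    fun i a => by rw [← map_sum, hmarg]⟩

/-- The `n`-incompatibility breaking channels form a two-sided ideal in the
monoid of channels under composition. -/
theorem nIBC_ideal {d : ℕ} (n : ℕ)
    (Λ Λ' : Mat d →ₗ[ℂ] Mat d) (hΛ : IsChannel Λ) (hΛ' : IsChannel Λ')
    (hΛ'n : NIBC n Λ') :
    NIBC n (Λ ∘ₗ Λ') ∧ NIBC n (Λ' ∘ₗ Λ) := by
  constructor
  · intro Ω _ _ A hA
    exact channel_compat hΛ (hΛ'n Ω _ _ A hA)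
  · intro Ω _ _ A hA
    exact hΛ'n Ω _ _ (fun i a => Λ (A i a)) (fun i => channel_povm hΛ (hA i))
end

section
/- The infinite family of noisy qubit spin observables {S^n_{1/2} : n a unit vector in ℝ³}, where S^n_{1/2}(±) = ½(1 ± ½ n·σ), is compatible: each S^n_{1/2} is a postprocessing of the continuous spin-direction POVM D(X) = (1/4π)∫_X (1 + k·σ)dk on the unit sphere, via the kernel f_n(±,k) = 1 if ±k·n > 0 and 0 otherwise. -/
open scoped BigOperators ComplexOrder Real
open Matrix MeasureTheory

abbrev Mat2 := Matrix (Fin 2) (Fin 2) ℂ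

attribute [local instance] Matrix.frobeniusNormedAddCommGroup Matrix.frobeniusNormedSpace

noncomputable def sigmaX : Mat2 := !![0, 1; 1, 0]
noncomputable def sigmaY : Mat2 := !![0, -Complex.I; Complex.I, 0]
noncomputable def sigmaZ : Mat2 := !![1, 0; 0, -1]

/-- `k·σ` for a vector `k ∈ ℝ³`. -/
noncomputable def dotSigma (k : EuclideanSpace ℝ (Fin 3)) : Mat2 :=
  ((k 0 : ℂ)) • sigmaX + ((k 1 : ℂ)) • sigmaY + ((k 2 : ℂ)) • sigmaZ

/-- The surface measure on the unit sphere `S² ⊂ ℝ³` (total mass `4π`). -/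
noncomputable def sphereMeasure :
    Measure (Metric.sphere (0 : EuclideanSpace ℝ (Fin 3)) 1) :=
  (volume : Measure (EuclideanSpace ℝ (Fin 3))).toSphere

/-- The postprocessing kernel `f_n(±, k) = 1` if `± k·n > 0`, else `0`. -/
noncomputable def fKernel (nv : EuclideanSpace ℝ (Fin 3)) (ε : Bool)
    (k : Metric.sphere (0 : EuclideanSpace ℝ (Fin 3)) 1) : ℝ :=
  if (if ε then (0 : ℝ) < inner ℝ (k : EuclideanSpace ℝ (Fin 3)) nv
      else (inner ℝ (k : EuclideanSpace ℝ (Fin 3)) nv : ℝ) < 0) then 1 else 0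

/-! Put `u = ±n` and `H = {x : 0 < ⟪x, u⟫}`. Since `k ↦ k·σ` is linear, the integral is
`|H ∩ S²| + (∫_{H ∩ S²} k dk)·σ`, so it suffices to show `|H ∩ S²| = 2π` and
`∫_{H ∩ S²} k dk = π u`. Both follow by integrating `1_H(x)` and `1_H(x) x` against the Gaussian
`exp (-‖x‖²)` over `ℝ³` in two ways: in polar coordinates the integral factors into a radial Gamma
integral times the spherical one, while in an orthonormal basis containing `u` the Gaussian is a
product of one-dimensional Gaussians, and Fubini reduces everything to `∫ exp (-t²) = √π`,
`∫ t exp (-t²) = 0` and their half-line versions. -/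

open Real Set Metric Module
open scoped RealInnerProductSpace

theorem integral_Ioi_pow_mul_exp_neg_sq (n : ℕ) :
    ∫ t in Ioi (0 : ℝ), t ^ n * exp (-t ^ 2) = Gamma ((n + 1) / 2) / 2 := by
  have h := integral_rpow_mul_exp_neg_rpow (p := 2) (q := n) two_pos
    (by linarith [(n.cast_nonneg : (0 : ℝ) ≤ n)])
  rw [div_eq_inv_mul, ← one_div, ← h]
  refine setIntegral_congr_fun measurableSet_Ioi fun t _ => ?_
  simp only [rpow_natCast, rpow_two]

theorem integral_Ioi_sq_mul_exp_neg_sq :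
    ∫ t in Ioi (0 : ℝ), t ^ 2 * exp (-t ^ 2) = √π / 4 := by
  have h := Real.Gamma_nat_add_half 1
  norm_num at h
  rw [integral_Ioi_pow_mul_exp_neg_sq, show ((2 : ℕ) + 1 : ℝ) / 2 = 3 / 2 by norm_num, h]
  ring

theorem integral_Ioi_pow_three_mul_exp_neg_sq :
    ∫ t in Ioi (0 : ℝ), t ^ 3 * exp (-t ^ 2) = 1 / 2 := by
  rw [integral_Ioi_pow_mul_exp_neg_sq, show ((3 : ℕ) + 1 : ℝ) / 2 = 2 by norm_num, Gamma_two]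

theorem integral_indicator_Ioi_exp_neg_sq :
    ∫ t, (Ioi (0 : ℝ)).indicator (fun t => exp (-t ^ 2)) t = √π / 2 := by
  rw [integral_indicator measurableSet_Ioi]
  simpa using integral_gaussian_Ioi 1

theorem integral_indicator_Ioi_mul_exp_neg_sq :
    ∫ t, (Ioi (0 : ℝ)).indicator (fun t => t * exp (-t ^ 2)) t = 1 / 2 := by
  rw [integral_indicator measurableSet_Ioi]
  simpa using integral_Ioi_pow_mul_exp_neg_sq 1

theorem integral_mul_exp_neg_sq : ∫ t : ℝ, t * exp (-t ^ 2) = 0 := by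
  have h := integral_neg_eq_self (fun t : ℝ => t * exp (-t ^ 2)) volume
  simp only [neg_sq, neg_mul, integral_neg] at h
  linarith

namespace EuclideanSpace
variable {ι : Type*} [Fintype ι]

theorem integral_prod_apply (g : ι → ℝ → ℝ) :
    ∫ y : EuclideanSpace ℝ ι, ∏ i, g i (y i) = ∏ i, ∫ t, g i t := by
  rw [← (PiLp.volume_preserving_toLp ι).integral_comp
    (MeasurableEquiv.toLp 2 (ι → ℝ)).measurableEmbedding]
  exact integral_fintype_prod_volume_eq_prod g

theorem integrable_prod_apply {g : ι → ℝ → ℝ} (hg : ∀ i, Integrable (g i)) :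
    Integrable fun y : EuclideanSpace ℝ ι => ∏ i, g i (y i) := by
  rw [← (PiLp.volume_preserving_toLp ι).integrable_comp_emb
    (MeasurableEquiv.toLp 2 (ι → ℝ)).measurableEmbedding]
  exact Integrable.fintype_prod hg

theorem exp_neg_norm_sq_eq_prod (y : EuclideanSpace ℝ ι) :
    exp (-‖y‖ ^ 2) = ∏ i, exp (-y i ^ 2) := by
  rw [EuclideanSpace.norm_sq_eq, ← Finset.sum_neg_distrib, exp_sum]
  simp [Real.norm_eq_abs, sq_abs]

variable [DecidableEq ι]

theorem integral_ite_pos_mul_exp_neg_norm_sq (i₀ : ι) :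
    ∫ y : EuclideanSpace ℝ ι, (if 0 < y i₀ then 1 else 0) * exp (-‖y‖ ^ 2)
      = √π ^ Fintype.card ι / 2 := by
  let g : ι → ℝ → ℝ := fun i t =>
    (if i = i₀ then (Ioi 0).indicator 1 t else 1) * exp (-t ^ 2)
  have hg : ∀ y : EuclideanSpace ℝ ι,
      (if 0 < y i₀ then 1 else 0) * exp (-‖y‖ ^ 2) = ∏ i, g i (y i) := by
    intro y
    simp only [g, Finset.prod_mul_distrib, Finset.prod_ite_eq', Finset.mem_univ, if_true,
      exp_neg_norm_sq_eq_prod]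
    simp [Set.indicator_apply]
  have hgi : ∀ i, ∫ t, g i t = (if i = i₀ then 1 / 2 else 1) * √π := by
    intro i
    by_cases hi : i = i₀
    · have : g i = (Ioi 0).indicator fun t => exp (-t ^ 2) := by
        ext t; simp [g, hi, Set.indicator_apply]
      rw [this, integral_indicator_Ioi_exp_neg_sq, if_pos hi]; ring
    · simpa [g, hi] using integral_gaussian 1
  simp_rw [hg, integral_prod_apply, hgi, Finset.prod_mul_distrib, Finset.prod_ite_eq',
    Finset.mem_univ, if_true, Finset.prod_const, Finset.card_univ]
  ring

theorem integral_ite_pos_mul_exp_neg_norm_sq_smul (i₀ : ι) :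
    ∫ y : EuclideanSpace ℝ ι, ((if 0 < y i₀ then 1 else 0) * exp (-‖y‖ ^ 2)) • y
      = (√π ^ (Fintype.card ι - 1) / 2) • EuclideanSpace.single i₀ 1 := by
  let g : ι → ι → ℝ → ℝ := fun j i t =>
    (if i = i₀ then (Ioi 0).indicator 1 t else 1) * ((if i = j then t else 1) * exp (-t ^ 2))
  have hg : ∀ j (y : EuclideanSpace ℝ ι),
      (((if 0 < y i₀ then 1 else 0) * exp (-‖y‖ ^ 2)) • y) j = ∏ i, g j i (y i) := by
    intro j y
    simp only [g, Finset.prod_mul_distrib, Finset.prod_ite_eq', Finset.mem_univ, if_true,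
      exp_neg_norm_sq_eq_prod, PiLp.smul_apply, smul_eq_mul, Set.indicator_apply, mem_Ioi,
      Pi.one_apply]
    split_ifs <;> ring
  have hg_int : ∀ j i, Integrable (g j i) := by
    intro j i
    refine Integrable.bdd_mul (c := 1) ?_ ?_ (ae_of_all _ fun t => ?_)
    · split_ifs
      · simpa using integrable_mul_exp_neg_mul_sq one_pos
      · simpa using integrable_exp_neg_mul_sq one_pos
    · split_ifs
      · exact (measurable_one.indicator measurableSet_Ioi).aestronglyMeasurable
      · exact aestronglyMeasurable_const
    · simp only [Set.indicator_apply]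
      split_ifs <;> simp
  ext j
  rw [eval_integral_piLp (fun j => by simpa only [hg] using integrable_prod_apply (hg_int j)) j]
  simp_rw [hg, integral_prod_apply]
  by_cases hj : j = i₀
  · subst hj
    have hgj : g j j = (Ioi 0).indicator fun t => t * exp (-t ^ 2) := by
      ext t; simp [g, Set.indicator_apply]
    have hgi : ∀ i ∈ ({j}ᶜ : Finset ι), ∫ t, g j i t = √π := fun i hi => by
      simpa [g, (by simpa using hi : i ≠ j)] using integral_gaussian 1
    rw [Fintype.prod_eq_mul_prod_compl j, Finset.prod_congr rfl hgi, hgj,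
      integral_indicator_Ioi_mul_exp_neg_sq, Finset.prod_const, Finset.card_compl,
      Finset.card_singleton]
    simp; ring
  · refine (Finset.prod_eq_zero (Finset.mem_univ j) ?_).trans (by simp [hj])
    simpa [g, hj] using integral_mul_exp_neg_sq

end EuclideanSpace

section InnerProductSpace
variable {E : Type*} [NormedAddCommGroup E] [InnerProductSpace ℝ E]

theorem OrthonormalBasis.inner_repr_symm_apply_self {ι : Type*} [Fintype ι]
    (b : OrthonormalBasis ι ℝ E) (y : EuclideanSpace ℝ ι) (i : ι) :
    ⟪b.repr.symm y, b i⟫ = y i := by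
  rw [real_inner_comm, ← b.repr_apply_apply, LinearIsometryEquiv.apply_symm_apply]

theorem inner_inv_norm_smul_pos_iff (x u : E) : 0 < ⟪‖x‖⁻¹ • x, u⟫ ↔ 0 < ⟪x, u⟫ := by
  rw [real_inner_smul_left]
  rcases eq_or_ne x 0 with rfl | hx
  · simp
  · exact mul_pos_iff_of_pos_left (by positivity)

variable [FiniteDimensional ℝ E]

theorem OrthonormalBasis.exists_apply_eq {ι : Type*} [Fintype ι]
    (hι : finrank ℝ E = Fintype.card ι) (i₀ : ι) {u : E} (hu : ‖u‖ = 1) :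
    ∃ b : OrthonormalBasis ι ℝ E, b i₀ = u := by
  have horth : Orthonormal ℝ (({i₀} : Set ι).domRestrict fun _ => u) :=
    ⟨fun _ => hu, fun i j hij => (hij (Subtype.ext (i.2.trans j.2.symm))).elim⟩
  obtain ⟨b, hb⟩ := horth.exists_orthonormalBasis_extension_of_card_eq hι
  exact ⟨b, hb i₀ rfl⟩

theorem exists_orthonormalBasis_fin_apply_eq {u : E} (hu : ‖u‖ = 1) :
    ∃ (i₀ : Fin (finrank ℝ E)) (b : OrthonormalBasis (Fin (finrank ℝ E)) ℝ E), b i₀ = u := by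
  have : Nontrivial E := ⟨u, 0, by rintro rfl; simp at hu⟩
  exact ⟨⟨0, finrank_pos⟩, OrthonormalBasis.exists_apply_eq (Fintype.card_fin _).symm _ hu⟩

variable [MeasurableSpace E] [BorelSpace E]

theorem integral_ite_inner_pos_mul_exp_neg_norm_sq {u : E} (hu : ‖u‖ = 1) :
    ∫ x : E, (if 0 < ⟪x, u⟫ then 1 else 0) * exp (-‖x‖ ^ 2) = √π ^ finrank ℝ E / 2 := by
  obtain ⟨i₀, b, rfl⟩ := exists_orthonormalBasis_fin_apply_eq hu
  rw [← b.repr.symm.measurePreserving.integral_comp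
    b.repr.symm.toHomeomorph.measurableEmbedding]
  simp only [LinearIsometryEquiv.norm_map, b.inner_repr_symm_apply_self]
  simpa using EuclideanSpace.integral_ite_pos_mul_exp_neg_norm_sq i₀

theorem integral_ite_inner_pos_mul_exp_neg_norm_sq_smul {u : E} (hu : ‖u‖ = 1) :
    ∫ x : E, ((if 0 < ⟪x, u⟫ then 1 else 0) * exp (-‖x‖ ^ 2)) • x
      = (√π ^ (finrank ℝ E - 1) / 2) • u := by
  obtain ⟨i₀, b, rfl⟩ := exists_orthonormalBasis_fin_apply_eq hu
  rw [← b.repr.symm.measurePreserving.integral_comp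
    b.repr.symm.toHomeomorph.measurableEmbedding]
  simp only [LinearIsometryEquiv.norm_map, b.inner_repr_symm_apply_self,
    ← LinearIsometryEquiv.map_smul]
  refine (b.repr.symm.toLinearIsometry.integral_comp_comm _).trans ?_
  rw [LinearIsometryEquiv.coe_toLinearIsometry,
    EuclideanSpace.integral_ite_pos_mul_exp_neg_norm_sq_smul, LinearIsometryEquiv.map_smul,
    b.repr_symm_single, Fintype.card_fin]

end InnerProductSpace

section Polar
variable {E F : Type*} [NormedAddCommGroup E] [NormedSpace ℝ E] [FiniteDimensional ℝ E]
  [Nontrivial E] [MeasurableSpace E] [BorelSpace E] [NormedAddCommGroup F] [NormedSpace ℝ F]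
  (μ : Measure E) [μ.IsAddHaarMeasure]

theorem integral_volumeIoiPow (n : ℕ) (h : ℝ → F) :
    ∫ r : Ioi (0 : ℝ), h r ∂Measure.volumeIoiPow n = ∫ r in Ioi (0 : ℝ), r ^ n • h r := by
  simp only [Measure.volumeIoiPow, ENNReal.ofReal]
  rw [integral_withDensity_eq_integral_smul (measurable_subtype_coe.pow_const _).real_toNNReal,
    integral_subtype_comap measurableSet_Ioi fun r => Real.toNNReal (r ^ n) • h r]
  refine setIntegral_congr_fun measurableSet_Ioi fun r hr => ?_
  rw [NNReal.smul_def, Real.coe_toNNReal _ (pow_nonneg (le_of_lt hr) _)]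

theorem integral_smul_comp_inv_norm_smul (h : ℝ → ℝ) (f : E → F) :
    ∫ x, h ‖x‖ • f (‖x‖⁻¹ • x) ∂μ
      = (∫ r in Ioi (0 : ℝ), r ^ (finrank ℝ E - 1) * h r) •
          ∫ k : sphere (0 : E) 1, f k ∂μ.toSphere :=
  calc
    ∫ x, h ‖x‖ • f (‖x‖⁻¹ • x) ∂μ
        = ∫ x : ({0}ᶜ : Set E), h ‖(x : E)‖ • f (‖(x : E)‖⁻¹ • (x : E)) ∂μ.comap (↑) := by
      rw [integral_subtype_comap (measurableSet_singleton _).compl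
        fun x => h ‖x‖ • f (‖x‖⁻¹ • x), restrict_compl_singleton]
    _ = ∫ p, h p.2 • f p.1 ∂μ.toSphere.prod (Measure.volumeIoiPow (finrank ℝ E - 1)) := by
      simpa using μ.measurePreserving_homeomorphUnitSphereProd.integral_comp
        (Homeomorph.measurableEmbedding _) (fun p => h p.2 • f p.1)
    _ = (∫ r : Ioi (0 : ℝ), h r ∂Measure.volumeIoiPow (finrank ℝ E - 1)) •
          ∫ k : sphere (0 : E) 1, f k ∂μ.toSphere := by
      rw [← integral_prod_swap]
      exact integral_prod_smul (fun r : Ioi (0 : ℝ) => h r) (fun k : sphere (0 : E) 1 => f k)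
    _ = _ := by rw [integral_volumeIoiPow]; rfl

end Polar

section Sphere
variable {E : Type*} [NormedAddCommGroup E] [InnerProductSpace ℝ E] [FiniteDimensional ℝ E]
  [MeasurableSpace E] [BorelSpace E]

theorem measurable_ite_inner_pos (u : E) :
    Measurable fun k : sphere (0 : E) 1 => if 0 < ⟪(k : E), u⟫ then (1 : ℝ) else 0 :=
  Measurable.ite (measurableSet_lt measurable_const (by fun_prop)) measurable_const
    measurable_const

variable {μ : Measure (sphere (0 : E) 1)} [IsFiniteMeasure μ]

theorem integrable_ite_inner_pos (u : E) :
    Integrable (fun k : sphere (0 : E) 1 => if 0 < ⟪(k : E), u⟫ then (1 : ℝ) else 0) μ :=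
  .of_bound (measurable_ite_inner_pos u).aestronglyMeasurable 1
    (ae_of_all _ fun k => by split_ifs <;> simp)

theorem integrable_ite_inner_pos_smul (u : E) :
    Integrable (fun k : sphere (0 : E) 1 =>
      (if 0 < ⟪(k : E), u⟫ then (1 : ℝ) else 0) • (k : E)) μ :=
  .of_bound ((measurable_ite_inner_pos u).smul measurable_subtype_coe).aestronglyMeasurable 1
    (ae_of_all _ fun k => by split_ifs <;> simp)

theorem integral_toSphere_ite_inner_pos (hE : finrank ℝ E = 3) {u : E} (hu : ‖u‖ = 1) :
    ∫ k : sphere (0 : E) 1, (if 0 < ⟪(k : E), u⟫ then 1 else 0) ∂(volume : Measure E).toSphere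
      = 2 * π := by
  have : Nontrivial E := nontrivial_of_finrank_eq_succ hE
  have h := integral_smul_comp_inv_norm_smul volume (fun r => exp (-r ^ 2))
    (fun x : E => if 0 < ⟪x, u⟫ then (1 : ℝ) else 0)
  simp only [inner_inv_norm_smul_pos_iff, smul_eq_mul, mul_comm (exp _),
    integral_ite_inner_pos_mul_exp_neg_norm_sq hu, hE, Nat.reduceSub,
    integral_Ioi_sq_mul_exp_neg_sq] at h
  have hπ : √π ^ 2 = π := sq_sqrt pi_pos.le
  refine mul_left_cancel₀ (sqrt_pos.mpr pi_pos).ne' ?_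
  linear_combination (-4) * h + 2 * √π * hπ

theorem integral_toSphere_ite_inner_pos_smul (hE : finrank ℝ E = 3) {u : E} (hu : ‖u‖ = 1) :
    ∫ k : sphere (0 : E) 1, (if 0 < ⟪(k : E), u⟫ then (1 : ℝ) else 0) • (k : E)
      ∂(volume : Measure E).toSphere = π • u := by
  have : Nontrivial E := nontrivial_of_finrank_eq_succ hE
  have h := integral_smul_comp_inv_norm_smul volume (fun r => r * exp (-r ^ 2))
    (fun x : E => (if 0 < ⟪x, u⟫ then (1 : ℝ) else 0) • x)
  have hintegrand : ∀ x : E,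
      (‖x‖ * exp (-‖x‖ ^ 2)) • (if 0 < ⟪‖x‖⁻¹ • x, u⟫ then (1 : ℝ) else 0) • ‖x‖⁻¹ • x
        = ((if 0 < ⟪x, u⟫ then 1 else 0) * exp (-‖x‖ ^ 2)) • x := by
    intro x
    rcases eq_or_ne x 0 with rfl | hx
    · simp
    · simp only [inner_inv_norm_smul_pos_iff, smul_smul]
      congr 1
      field_simp
  simp only [hintegrand, integral_ite_inner_pos_mul_exp_neg_norm_sq_smul hu, hE, Nat.reduceSub,
    ← mul_assoc, ← pow_succ, integral_Ioi_pow_three_mul_exp_neg_sq, sq_sqrt pi_pos.le] at h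
  have h2 := congrArg ((2 : ℝ) • ·) h
  rw [smul_smul, smul_smul, show (2 : ℝ) * (π / 2) = π by ring,
    show (2 : ℝ) * (1 / 2) = 1 by norm_num, one_smul] at h2
  exact h2.symm

end Sphere

theorem dotSigma_add (v w : EuclideanSpace ℝ (Fin 3)) :
    dotSigma (v + w) = dotSigma v + dotSigma w := by
  simp only [dotSigma, PiLp.add_apply, Complex.ofReal_add, add_smul]
  abel

theorem dotSigma_smul (a : ℝ) (v : EuclideanSpace ℝ (Fin 3)) :
    dotSigma (a • v) = a • dotSigma v := by
  simp only [dotSigma, PiLp.smul_apply, smul_eq_mul, Complex.ofReal_mul, mul_smul, smul_add,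
    Complex.coe_smul]

theorem dotSigma_neg (v : EuclideanSpace ℝ (Fin 3)) : dotSigma (-v) = -dotSigma v := by
  simpa using dotSigma_smul (-1) v

noncomputable def dotSigmaCLM : EuclideanSpace ℝ (Fin 3) →L[ℝ] Mat2 :=
  LinearMap.toContinuousLinearMap ⟨⟨dotSigma, dotSigma_add⟩, dotSigma_smul⟩

theorem integral_smul_one_add_dotSigma {X : Type*} [MeasurableSpace X] {μ : Measure X}
    {c : X → ℝ} {φ : X → EuclideanSpace ℝ (Fin 3)} (hc : Integrable c μ)
    (hφ : Integrable (fun x => c x • φ x) μ) :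
    ∫ x, c x • (1 + dotSigma (φ x)) ∂μ = (∫ x, c x ∂μ) • 1 + dotSigma (∫ x, c x • φ x ∂μ) := by
  simp_rw [smul_add, ← dotSigma_smul]
  -- `Integrable` needs the topology of the Frobenius norm, not the product topology of `Matrix`.
  let : TopologicalSpace Mat2 := PseudoMetricSpace.toUniformSpace.toTopologicalSpace
  have hσ : Integrable (fun x => dotSigma (c x • φ x)) μ := dotSigmaCLM.integrable_comp hφ
  rw [integral_add (hc.smul_const 1) hσ, integral_smul_const]
  exact congrArg _ (dotSigmaCLM.integral_comp_comm hφ)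

theorem fKernel_eq_ite_inner_pos (nv : EuclideanSpace ℝ (Fin 3)) (ε : Bool) :
    fKernel nv ε = fun k : sphere (0 : EuclideanSpace ℝ (Fin 3)) 1 =>
      if 0 < ⟪(k : EuclideanSpace ℝ (Fin 3)), if ε then nv else -nv⟫ then 1 else 0 := by
  ext k
  cases ε <;> simp [fKernel, inner_neg_right]

/-- Each noisy spin observable `S^n_{1/2}(±) = ½(1 ± ½ n·σ)` is a
postprocessing of the continuous spin-direction POVM `D(X) = (1/4π)∫_X (1 + k·σ) dk` via the
kernel `f_n`; hence the infinite family `{S^n_{1/2}}` over all unit vectors `n` is compatible. -/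
theorem noisy_spin_family_compatible
    (nv : EuclideanSpace ℝ (Fin 3)) (hnv : ‖nv‖ = 1) (ε : Bool) :
    (1 / (4 * π)) •
        ∫ k, fKernel nv ε k • ((1 : Mat2) + dotSigma (k : EuclideanSpace ℝ (Fin 3)))
          ∂sphereMeasure
      = (1 / 2 : ℂ) •
          ((1 : Mat2) + (if ε then (1 / 2 : ℂ) else -(1 / 2 : ℂ)) • dotSigma nv) := by
  set u : EuclideanSpace ℝ (Fin 3) := if ε then nv else -nv
  have hu : ‖u‖ = 1 := by cases ε <;> simp [u, hnv]
  have hE : finrank ℝ (EuclideanSpace ℝ (Fin 3)) = 3 := finrank_euclideanSpace_fin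
  have hsign : (if ε then (1 / 2 : ℂ) else -(1 / 2 : ℂ)) • dotSigma nv
      = (1 / 2 : ℂ) • dotSigma u := by
    cases ε <;> simp [u, dotSigma_neg]
  rw [fKernel_eq_ite_inner_pos, sphereMeasure,
    integral_smul_one_add_dotSigma (integrable_ite_inner_pos u) (integrable_ite_inner_pos_smul u),
    integral_toSphere_ite_inner_pos hE hu, integral_toSphere_ite_inner_pos_smul hE hu,
    dotSigma_smul, hsign]
  match_scalars <;> field_simp <;> ring
end

section
/- Let n ≥ 3 and let m ≥ n² be odd. Then 1/√m < (n + 2^p)/(n(2^p + 1)) where p = (m−1)/2; equivalently n < 2^p√(2p+1)/(2^p + 1 − √(2p+1)) holds whenever n ≤ √(2p+1). Consequently there exists t with 1/√m < t ≤ (n + 2^p)/(n(2^p+1)). -/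
/-- For integers `n ≥ 3` and odd `m ≥ n²` with `p = (m−1)/2`, one has
`1/√m < (n + 2^p)/(n(2^p + 1))`; consequently there exists `t` with
`1/√m < t ≤ (n + 2^p)/(n(2^p+1))`. -/
theorem specker_separation_inequality (n m : ℕ) (hn : 3 ≤ n) (hm : n ^ 2 ≤ m)
    (hodd : Odd m) :
    1 / Real.sqrt m < ((n : ℝ) + 2 ^ ((m - 1) / 2)) / (n * (2 ^ ((m - 1) / 2) + 1)) ∧
    ∃ t : ℝ, 1 / Real.sqrt m < t ∧
      t ≤ ((n : ℝ) + 2 ^ ((m - 1) / 2)) / (n * (2 ^ ((m - 1) / 2) + 1)) := by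
  have hn' : (3:ℝ) ≤ n := by exact_mod_cast hn
  have hnpos : (0:ℝ) < n := by linarith
  set q : ℝ := 2 ^ ((m - 1) / 2) with hq
  have hq1 : (1:ℝ) ≤ q := one_le_pow₀ (by norm_num)
  have hsm : (n:ℝ) ≤ Real.sqrt m := by
    rw [show ((n:ℝ)) = Real.sqrt ((n:ℝ)^2) by rw [Real.sqrt_sq hnpos.le]]
    apply Real.sqrt_le_sqrt
    exact_mod_cast hm
  have h1 : 1 / Real.sqrt m ≤ 1 / (n:ℝ) :=
    one_div_le_one_div_of_le hnpos hsm
  have h2 : 1 / (n:ℝ) < ((n:ℝ) + q) / (n * (q + 1)) := by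
    rw [div_lt_div_iff₀ hnpos (by positivity)]
    nlinarith
  have h := lt_of_le_of_lt h1 h2
  exact ⟨h, _, h, le_refl _⟩
end
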